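/- Let Δ̃ and Δ̃* be complex Hilbert spaces, and set H10 = ℓ²(ℕ, Δ̃) ⊕ ℓ²(ℕ, Δ̃*). Let S denote the unilateral forward shift ((Sx)(0) = 0, (Sx)(n+1) = x(n)) and S* the backward shift ((S*x)(n) = x(n+1)) on the corresponding ℓ² space. Define the colligation U10 = [[A10,B10],[C10,D10]] : H10 ⊕ Δ̃ → H10 ⊕ Δ̃* by A10(x,y) = (Sx, S*y), B10 δ = (the sequence δ·e0 supported at index 0, 0), C10(x,y) = y(0), D10 = 0. Then U10 is a unitary operator, U10 is a simple colligation (the smallest closed subspace of H10 containing range B10 and range C10* and invariant for both A10 and A10* is all of H10), and its characteristic function vanishes identically: D10 = 0 and C10 ∘ A10ⁿ ∘ B10 = 0 for every n ≥ 0. -/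

import Mathlib

/-!
Write `cons a x` for the sequence `a, x 0, x 1, …` and `tail y` for `y 1, y 2, …`, so that
`A (x, y) + B δ = (cons δ x, tail y)` and `C (x, y) = y 0`. The colligation only relocates
coordinates: `(x, y, δ) ↦ (cons δ x, tail y, y 0)` is a bijective isometry, i.e. `U10` is unitary.
The powers of `A` move `B δ = (δ e₀, 0)` to `(δ eₙ, 0)`, which `C` never sees, so the
characteristic function vanishes. Dually `C* ε = (0, ε e₀)` and `A*` moves it to `(0, ε eₙ)`, so
a closed subspace invariant under `A`, `A*` and containing the ranges of `B`, `C*` contains every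
`(δ eₙ, 0)` and `(0, ε eₙ)`; its orthogonal complement is then zero.
-/

open ContinuousLinearMap

/-- The state space `H10 = ℓ²(ℕ, Δ̃) ⊕₂ ℓ²(ℕ, Δ̃*)` of the simple unitary colligation with
zero characteristic function. -/
noncomputable abbrev H10 (Δ Δs : Type*) [NormedAddCommGroup Δ] [NormedAddCommGroup Δs] :
    Type _ :=
  WithLp 2 ((lp (fun _ : ℕ => Δ) 2) × (lp (fun _ : ℕ => Δs) 2))

namespace lp

section General

variable {α : Type*} {E : α → Type*} [∀ i, NormedAddCommGroup (E i)]

theorem hasSum_norm_sq (f : lp E 2) : HasSum (fun i => ‖f i‖ ^ 2) (‖f‖ ^ 2) := by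
  simpa [Real.rpow_natCast] using lp.hasSum_norm (p := 2) (by norm_num) f

theorem memℓp_two_of_summable_norm_sq {f : ∀ i, E i} (h : Summable fun i => ‖f i‖ ^ 2) :
    Memℓp f 2 :=
  memℓp_gen (by simpa [Real.rpow_natCast] using h)

theorem eq_zero_of_forall_inner_single {𝕜 : Type*} [RCLike 𝕜] [∀ i, InnerProductSpace 𝕜 (E i)]
    [DecidableEq α] {f : lp E 2} (h : ∀ i (a : E i), inner 𝕜 (lp.single 2 i a) f = 0) :
    f = 0 := by
  ext i
  simpa only [lp.inner_single_left, inner_self_eq_zero, lp.coeFn_zero, Pi.zero_apply]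
    using h i (f i)

end General

variable {E : Type*} [NormedAddCommGroup E]

def tail (f : lp (fun _ : ℕ => E) 2) : lp (fun _ : ℕ => E) 2 :=
  ⟨fun n => f (n + 1),
    memℓp_two_of_summable_norm_sq ((summable_nat_add_iff 1).2 (hasSum_norm_sq f).summable)⟩

def cons (a : E) (f : lp (fun _ : ℕ => E) 2) : lp (fun _ : ℕ => E) 2 :=
  ⟨fun n => Nat.casesOn n a fun m => f m,
    memℓp_two_of_summable_norm_sq
      ((summable_nat_add_iff 1).1 (by simpa using (hasSum_norm_sq f).summable))⟩

@[simp]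
theorem tail_apply (f : lp (fun _ : ℕ => E) 2) (n : ℕ) : tail f n = f (n + 1) := rfl

@[simp]
theorem cons_apply_zero (a : E) (f : lp (fun _ : ℕ => E) 2) : cons a f 0 = a := rfl

@[simp]
theorem cons_apply_succ (a : E) (f : lp (fun _ : ℕ => E) 2) (n : ℕ) :
    cons a f (n + 1) = f n := rfl

@[simp]
theorem tail_cons (a : E) (f : lp (fun _ : ℕ => E) 2) : tail (cons a f) = f := rfl

@[simp]
theorem cons_head_tail (f : lp (fun _ : ℕ => E) 2) : cons (f 0) (tail f) = f := by
  ext (_ | n) <;> rfl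

@[simp]
theorem tail_zero : tail (0 : lp (fun _ : ℕ => E) 2) = 0 := rfl

theorem cons_zero_single (n : ℕ) (a : E) :
    cons 0 (lp.single 2 n a) = lp.single 2 (n + 1) a := by
  ext (_ | m)
  · simp [lp.single_apply]
  · simp [lp.single_apply, Pi.single_apply]

theorem single_zero_eq_cons (a : E) : lp.single 2 0 a = cons a 0 := by
  ext (_ | m) <;> simp [lp.single_apply]

theorem norm_sq_eq_norm_sq_add_norm_sq_tail (f : lp (fun _ : ℕ => E) 2) :
    ‖f‖ ^ 2 = ‖f 0‖ ^ 2 + ‖tail f‖ ^ 2 := by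
  have := (hasSum_nat_add_iff' 1).2 (hasSum_norm_sq f)
  simp only [Finset.range_one, Finset.sum_singleton] at this
  linarith [this.unique (hasSum_norm_sq (tail f))]

theorem norm_sq_cons (a : E) (f : lp (fun _ : ℕ => E) 2) :
    ‖cons a f‖ ^ 2 = ‖a‖ ^ 2 + ‖f‖ ^ 2 := by
  rw [norm_sq_eq_norm_sq_add_norm_sq_tail, cons_apply_zero, tail_cons]

end lp

noncomputable section

namespace H10

variable {Δ Δs : Type*} [NormedAddCommGroup Δ] [NormedAddCommGroup Δs]

def inl (n : ℕ) (δ : Δ) : H10 Δ Δs := WithLp.toLp 2 (lp.single 2 n δ, 0)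

def inr (n : ℕ) (ε : Δs) : H10 Δ Δs := WithLp.toLp 2 (0, lp.single 2 n ε)

def shift (p : H10 Δ Δs) : H10 Δ Δs := WithLp.toLp 2 (lp.cons 0 p.fst, lp.tail p.snd)

theorem ext {p q : H10 Δ Δs} (h₁ : p.fst = q.fst) (h₂ : p.snd = q.snd) : p = q :=
  WithLp.ofLp_injective 2 (Prod.ext h₁ h₂)

theorem eq_shift_of_coord {p q : H10 Δ Δs} (h₀ : q.fst 0 = 0)
    (h₁ : ∀ n, q.fst (n + 1) = p.fst n) (h₂ : ∀ n, q.snd n = p.snd (n + 1)) :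
    q = shift p := by
  refine H10.ext (lp.ext (funext fun n => ?_)) (lp.ext (funext h₂))
  cases n with
  | zero => exact h₀
  | succ n => exact h₁ n

theorem shift_inl (n : ℕ) (δ : Δ) : shift (inl n δ : H10 Δ Δs) = inl (n + 1) δ := by
  simp only [shift, inl, WithLp.fst, WithLp.snd, lp.cons_zero_single, lp.tail_zero]

theorem shift_add_inl_zero (p : H10 Δ Δs) (δ : Δ) :
    shift p + inl 0 δ = WithLp.toLp 2 (lp.cons δ p.fst, lp.tail p.snd) := by
  rw [shift, inl, lp.single_zero_eq_cons, ← WithLp.toLp_add, Prod.mk_add_mk, add_zero]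
  congr
  ext (_ | n) <;> simp

theorem norm_sq_shift_add_inl_zero (p : H10 Δ Δs) (δ : Δ) :
    ‖shift p + inl 0 δ‖ ^ 2 + ‖p.snd 0‖ ^ 2 = ‖p‖ ^ 2 + ‖δ‖ ^ 2 := by
  rw [shift_add_inl_zero, WithLp.prod_norm_sq_eq_of_L2, WithLp.prod_norm_sq_eq_of_L2 p,
    lp.norm_sq_eq_norm_sq_add_norm_sq_tail p.snd]
  simp only [WithLp.fst, WithLp.snd, lp.norm_sq_cons]
  ring

theorem exists_shift_add_inl_zero_eq (q : H10 Δ Δs) (ε : Δs) :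
    ∃ (p : H10 Δ Δs) (δ : Δ), shift p + inl 0 δ = q ∧ p.snd 0 = ε :=
  ⟨WithLp.toLp 2 (lp.tail q.fst, lp.cons ε q.snd), q.fst 0,
    (shift_add_inl_zero _ _).trans (congrArg (WithLp.toLp 2) (Prod.ext (lp.cons_head_tail _) rfl)),
    rfl⟩

variable [InnerProductSpace ℂ Δ] [InnerProductSpace ℂ Δs]

theorem inner_inl_left (n : ℕ) (δ : Δ) (p : H10 Δ Δs) :
    inner ℂ (inl n δ) p = inner ℂ δ (p.fst n) := by
  simp [inl, WithLp.prod_inner_apply, lp.inner_single_left]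

theorem inner_inr_left (n : ℕ) (ε : Δs) (p : H10 Δ Δs) :
    inner ℂ (inr n ε) p = inner ℂ ε (p.snd n) := by
  simp [inr, WithLp.prod_inner_apply, lp.inner_single_left]

variable [CompleteSpace Δ] [CompleteSpace Δs]

theorem eq_top_of_inl_mem_of_inr_mem (T : Submodule ℂ (H10 Δ Δs))
    (hT : IsClosed (T : Set (H10 Δ Δs))) (hl : ∀ n δ, inl n δ ∈ T) (hr : ∀ n ε, inr n ε ∈ T) :
    T = ⊤ := by
  have : CompleteSpace T := hT.completeSpace_coe
  refine Submodule.orthogonal_eq_bot_iff.1 (Submodule.eq_bot_iff _ |>.2 fun p hp => ?_)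
  have hp' := (Submodule.mem_orthogonal T p).1 hp
  refine H10.ext ?_ ?_
  · exact lp.eq_zero_of_forall_inner_single (𝕜 := ℂ) fun n δ => by
      simpa only [lp.inner_single_left, inner_inl_left] using hp' _ (hl n δ)
  · exact lp.eq_zero_of_forall_inner_single (𝕜 := ℂ) fun n ε => by
      simpa only [lp.inner_single_left, inner_inr_left] using hp' _ (hr n ε)

theorem adjoint_eq_inr_zero {C : H10 Δ Δs →L[ℂ] Δs} (hC : ∀ p, C p = p.snd 0) (ε : Δs) :
    adjoint C ε = inr 0 ε :=
  ext_inner_right ℂ fun p => by rw [adjoint_inner_left, hC, inner_inr_left]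

theorem adjoint_inr {A : H10 Δ Δs →L[ℂ] H10 Δ Δs} (hA : ∀ p, A p = shift p) (n : ℕ) (ε : Δs) :
    adjoint A (inr n ε) = inr (n + 1) ε :=
  ext_inner_right ℂ fun p => by
    rw [adjoint_inner_left, hA, inner_inr_left, inner_inr_left]
    rfl

end H10

end

theorem stmt_13 {Δ Δs : Type*}
    [NormedAddCommGroup Δ] [InnerProductSpace ℂ Δ] [CompleteSpace Δ]
    [NormedAddCommGroup Δs] [InnerProductSpace ℂ Δs] [CompleteSpace Δs]
    (A10 : H10 Δ Δs →L[ℂ] H10 Δ Δs)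
    (hA10 : ∀ p : H10 Δ Δs,
      ((WithLp.equiv 2 _ (A10 p)).1) 0 = 0 ∧
      (∀ n : ℕ, ((WithLp.equiv 2 _ (A10 p)).1) (n + 1) = ((WithLp.equiv 2 _ p).1) n) ∧
      (∀ n : ℕ, ((WithLp.equiv 2 _ (A10 p)).2) n = ((WithLp.equiv 2 _ p).2) (n + 1)))
    (B10 : Δ →L[ℂ] H10 Δ Δs)
    (hB10 : ∀ δ : Δ, WithLp.equiv 2 _ (B10 δ) = (lp.single 2 0 δ, 0))
    (C10 : H10 Δ Δs →L[ℂ] Δs)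
    (hC10 : ∀ p : H10 Δ Δs, C10 p = ((WithLp.equiv 2 _ p).2) 0) :
    -- `U10` is a unitary operator `H10 ⊕ Δ̃ → H10 ⊕ Δ̃*` (with `D10 = 0`)
    (∀ (p : H10 Δ Δs) (δ : Δ),
        ‖A10 p + B10 δ‖ ^ 2 + ‖C10 p‖ ^ 2 = ‖p‖ ^ 2 + ‖δ‖ ^ 2) ∧
    (∀ (q : H10 Δ Δs) (ε : Δs), ∃ (p : H10 Δ Δs) (δ : Δ),
        A10 p + B10 δ = q ∧ C10 p = ε) ∧
    -- `U10` is a simple colligation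
    (∀ T : Submodule ℂ (H10 Δ Δs), IsClosed (T : Set (H10 Δ Δs)) →
        (∀ δ : Δ, B10 δ ∈ T) →
        (∀ ε : Δs, adjoint C10 ε ∈ T) →
        (∀ x ∈ T, A10 x ∈ T) →
        (∀ x ∈ T, adjoint A10 x ∈ T) →
        T = ⊤) ∧
    -- the characteristic function of `U10` vanishes identically
    (∀ n : ℕ, C10.comp ((A10 ^ n).comp B10) = 0) := by
  have hA : ∀ p, A10 p = H10.shift p := fun p =>
    H10.eq_shift_of_coord (hA10 p).1 (hA10 p).2.1 (hA10 p).2.2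
  have hB : ∀ δ, B10 δ = H10.inl 0 δ := fun δ => WithLp.ofLp_injective 2 (hB10 δ)
  have hC : ∀ p : H10 Δ Δs, C10 p = p.snd 0 := hC10
  have hApow_B : ∀ n δ, (A10 ^ n) (B10 δ) = H10.inl n δ := by
    intro n δ
    induction n with
    | zero => exact hB δ
    | succ n ih => rw [pow_succ', mul_apply_eq_comp, ih, hA, H10.shift_inl]
  refine ⟨fun p δ => ?_, fun q ε => ?_, fun T hT hBT hCT hAT hAT' => ?_, fun n => ?_⟩
  · rw [hA, hB, hC]
    exact H10.norm_sq_shift_add_inl_zero p δ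
  · simpa only [hA, hB, hC] using H10.exists_shift_add_inl_zero_eq q ε
  · refine H10.eq_top_of_inl_mem_of_inr_mem T hT (fun n δ => ?_) (fun n ε => ?_)
    · rw [← hApow_B]
      induction n with
      | zero => exact hBT δ
      | succ n ih => rw [pow_succ', mul_apply_eq_comp]; exact hAT _ ih
    · induction n with
      | zero => rw [← H10.adjoint_eq_inr_zero hC]; exact hCT ε
      | succ n ih => rw [← H10.adjoint_inr hA]; exact hAT' _ ih
  · ext δ
    rw [comp_apply, comp_apply, hApow_B, hC]
    rfl
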